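/- arXiv:1912.05651 — 4 statements merged into one kernel-verified Lean document; each statement's English description precedes it below -/
import Mathlib

section
/- Let M ≥ 2 and 0 < ε ≤ 1/M. Among all probability vectors w on Fin M with w_i ≥ ε for all i, the quantity ∑_i w_i² is maximized exactly by the vectors that have one coordinate equal to 1 − (M−1)ε and all other coordinates equal to ε. -/
theorem sum_sq_maximized_by_near_onehot (M : ℕ) (hM : 2 ≤ M) (ε : ℝ) (hε : 0 < ε)
    (hεM : ε ≤ 1 / M) (w : Fin M → ℝ) (hge : ∀ i, ε ≤ w i) (hsum : ∑ i, w i = 1) :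
    ∑ i, (w i) ^ 2 ≤ (1 - ((M : ℝ) - 1) * ε) ^ 2 + ((M : ℝ) - 1) * ε ^ 2 ∧
    (∑ i, (w i) ^ 2 = (1 - ((M : ℝ) - 1) * ε) ^ 2 + ((M : ℝ) - 1) * ε ^ 2 ↔
      ∃ j, w j = 1 - ((M : ℝ) - 1) * ε ∧ ∀ i, i ≠ j → w i = ε) := by
  set S : ℝ := 1 - M * ε with hS
  have ha : ∀ i, 0 ≤ w i - ε := fun i => by linarith [hge i]
  have haS : ∑ i, (w i - ε) = S := by
    rw [Finset.sum_sub_distrib, hsum, Finset.sum_const, Finset.card_univ,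
      Fintype.card_fin, nsmul_eq_mul, hS]
  have hle_i : ∀ i, w i - ε ≤ S := by
    intro i
    rw [← haS]
    exact Finset.single_le_sum (f := fun i => w i - ε) (fun j _ => ha j)
      (Finset.mem_univ i)
  have hid : S ^ 2 = ∑ i, (w i - ε) ^ 2 + ∑ i, (w i - ε) * (S - (w i - ε)) := by
    have h1 : S ^ 2 = ∑ i, (w i - ε) * S := by rw [← Finset.sum_mul, haS, sq]
    rw [h1, ← Finset.sum_add_distrib]
    exact Finset.sum_congr rfl (fun i _ => by ring)
  have hterm_nn : ∀ i ∈ Finset.univ (α := Fin M), 0 ≤ (w i - ε) * (S - (w i - ε)) :=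
    fun i _ => mul_nonneg (ha i) (by linarith [hle_i i])
  have hcross_nn : 0 ≤ ∑ i, (w i - ε) * (S - (w i - ε)) :=
    Finset.sum_nonneg hterm_nn
  have hsum_sq : ∑ i, (w i) ^ 2 = ∑ i, (w i - ε) ^ 2 + 2 * ε - M * ε ^ 2 := by
    have h1 : ∑ i, (w i) ^ 2 = ∑ i, ((w i - ε) ^ 2 + 2 * ε * w i - ε ^ 2) :=
      Finset.sum_congr rfl (fun i _ => by ring)
    rw [h1, Finset.sum_sub_distrib, Finset.sum_add_distrib, ← Finset.mul_sum, hsum,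
      Finset.sum_const, Finset.card_univ, Fintype.card_fin, nsmul_eq_mul]
    ring
  have hT : (1 - ((M : ℝ) - 1) * ε) ^ 2 + ((M : ℝ) - 1) * ε ^ 2
      = S ^ 2 + 2 * ε - M * ε ^ 2 := by rw [hS]; ring
  constructor
  · rw [hsum_sq, hT]
    nlinarith [hid, hcross_nn]
  · constructor
    · intro heq
      have hcz : ∑ i, (w i - ε) * (S - (w i - ε)) = 0 := by
        rw [hsum_sq, hT] at heq
        nlinarith [hid]
      have hall : ∀ i ∈ Finset.univ (α := Fin M), (w i - ε) * (S - (w i - ε)) = 0 :=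
        (Finset.sum_eq_zero_iff_of_nonneg hterm_nn).mp hcz
      by_cases hex : ∃ j, w j ≠ ε
      · obtain ⟨j, hj⟩ := hex
        have hjS : w j - ε = S := by
          have := hall j (Finset.mem_univ j)
          rcases mul_eq_zero.mp this with h | h
          · exact absurd (by linarith : w j = ε) hj
          · linarith
        rw [hS] at hjS
        refine ⟨j, by linear_combination hjS, ?_⟩
        intro i hi
        have hrest : ∑ k ∈ Finset.univ.erase j, (w k - ε) = 0 := by
          have := Finset.add_sum_erase Finset.univ (fun k => w k - ε) (Finset.mem_univ j)
          rw [haS, hS] at this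
          linarith [hjS]
        have := (Finset.sum_eq_zero_iff_of_nonneg
          (fun k _ => ha k)).mp hrest i (Finset.mem_erase.mpr ⟨hi, Finset.mem_univ i⟩)
        linarith
      · push_neg at hex
        have hS0 : S = 0 := by
          rw [← haS]
          exact Finset.sum_eq_zero (fun i _ => by rw [hex i]; ring)
        have hMε : (M : ℝ) * ε = 1 := by rw [hS] at hS0; linarith
        refine ⟨⟨0, by omega⟩, ?_, fun i _ => hex i⟩
        rw [hex _]
        linarith
    · rintro ⟨j, hj, hrest⟩
      have hcard : (Finset.univ.erase j).card = M - 1 := by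
        rw [Finset.card_erase_of_mem (Finset.mem_univ j), Finset.card_univ,
          Fintype.card_fin]
      have : ∑ i, (w i) ^ 2 = (w j) ^ 2 + ∑ i ∈ Finset.univ.erase j, (w i) ^ 2 :=
        (Finset.add_sum_erase Finset.univ (fun i => (w i) ^ 2) (Finset.mem_univ j)).symm
      rw [this, hj]
      have h2 : ∑ i ∈ Finset.univ.erase j, (w i) ^ 2 = ((M : ℝ) - 1) * ε ^ 2 := by
        rw [Finset.sum_congr rfl (fun i hi => by
          rw [hrest i (Finset.mem_erase.mp hi).1]), Finset.sum_const, hcard,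
          nsmul_eq_mul]
        have : ((M - 1 : ℕ) : ℝ) = (M : ℝ) - 1 := by
          have : 1 ≤ M := by omega
          push_cast [this]; ring
        rw [this]
      rw [h2]
end

section
/- Let M ≥ 2 and 0 < ε ≤ 1/M. Among all probability vectors w on Fin M with w_i ≥ ε for all i, the score K(w) = −(1/M) ∑_i log(M w_i) is maximized exactly by the vectors having one coordinate equal to 1 − (M−1)ε and all others equal to ε. -/
/-!
Write `L = 1 - (M - 1) ε`. Every coordinate lies in `[ε, L]`, and on that interval the strictly
concave `log` lies above its chord, with equality only at the endpoints. The chord is affine, so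
its values at the `w i` sum to the same total as at a near-one-hot vector, which has the same
coordinate sum. Hence `∑ log w i ≥ log L + (M - 1) log ε`, with equality only if every
coordinate is `ε` or `L`; the sum constraint then leaves exactly one coordinate equal to `L`.
-/

open Finset Real

theorem ConcaveOn.chord_le {s : Set ℝ} {f : ℝ → ℝ} (hf : ConcaveOn ℝ s f) {a b x : ℝ}
    (ha : a ∈ s) (hb : b ∈ s) (hax : a ≤ x) (hxb : x ≤ b) :
    (b - x) * f a + (x - a) * f b ≤ (b - a) * f x := by
  rcases hax.eq_or_lt with rfl | hax
  · ring_nf; rfl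
  rcases hxb.eq_or_lt with rfl | hxb
  · ring_nf; rfl
  have h := hf.slope_anti_adjacent ha hb hax hxb
  rw [div_le_div_iff₀ (by linarith) (by linarith)] at h
  linarith

theorem StrictConcaveOn.chord_lt {s : Set ℝ} {f : ℝ → ℝ} (hf : StrictConcaveOn ℝ s f) {a b x : ℝ}
    (ha : a ∈ s) (hb : b ∈ s) (hax : a < x) (hxb : x < b) :
    (b - x) * f a + (x - a) * f b < (b - a) * f x := by
  have h := hf.slope_anti_adjacent ha hb hax hxb
  rw [div_lt_div_iff₀ (by linarith) (by linarith)] at h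
  linarith

section PeakVector

variable {ι : Type*} [Fintype ι] {ε L : ℝ} {w : ι → ℝ}

theorem sum_erase_const [DecidableEq ι] (j : ι) (c : ℝ) :
    ∑ _i ∈ univ.erase j, c = (Fintype.card ι - 1) * c := by
  rw [sum_const, card_erase_of_mem (mem_univ j), card_univ, nsmul_eq_mul,
    Nat.cast_pred (Fintype.card_pos_iff.2 ⟨j⟩)]

theorem le_of_sum_eq_add_mul (hge : ∀ i, ε ≤ w i)
    (hL : ∑ i, w i = L + (Fintype.card ι - 1) * ε) (j : ι) : w j ≤ L := by
  classical
  have h := sum_le_sum fun i (_ : i ∈ univ.erase j) => hge i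
  rw [sum_erase_const, sum_erase_eq_sub (mem_univ j), hL] at h
  linarith

theorem eq_of_ne_of_sum_eq_add_mul (hge : ∀ i, ε ≤ w i)
    (hL : ∑ i, w i = L + (Fintype.card ι - 1) * ε) {j : ι} (hj : w j = L) {i : ι}
    (hij : i ≠ j) : w i = ε := by
  classical
  have h : ∑ _k ∈ univ.erase j, ε = ∑ k ∈ univ.erase j, w k := by
    rw [sum_erase_const, sum_erase_eq_sub (mem_univ j), hL, hj]
    ring
  exact ((sum_eq_sum_iff_of_le fun k _ => hge k).1 h i (mem_erase.2 ⟨hij, mem_univ i⟩)).symm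

theorem sum_comp_eq_of_peak (f : ℝ → ℝ) {j : ι} (hj : w j = L) (hne : ∀ i ≠ j, w i = ε) :
    ∑ i, f (w i) = f L + (Fintype.card ι - 1) * f ε := by
  classical
  rw [← add_sum_erase _ _ (mem_univ j), hj,
    sum_congr rfl fun i hi => by rw [hne i (ne_of_mem_erase hi)], sum_erase_const]

theorem exists_peak_of_forall_eq_or_eq [Nonempty ι] (hge : ∀ i, ε ≤ w i)
    (hL : ∑ i, w i = L + (Fintype.card ι - 1) * ε) (hw : ∀ i, w i = ε ∨ w i = L) :
    ∃ j, w j = L ∧ ∀ i ≠ j, w i = ε := by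
  by_cases hpeak : ∃ j, w j = L
  · obtain ⟨j, hj⟩ := hpeak
    exact ⟨j, hj, fun i => eq_of_ne_of_sum_eq_add_mul hge hL hj⟩
  simp only [not_exists] at hpeak
  have hflat : ∀ i, w i = ε := fun i => (hw i).resolve_right (hpeak i)
  obtain ⟨j⟩ := ‹Nonempty ι›
  have hsum := sum_comp_eq_of_peak id (hflat j) fun i _ => hflat i
  simp only [id] at hsum
  exact absurd (show w j = L by linarith [hflat j]) (hpeak j)

theorem sum_chord_eq (f : ℝ → ℝ) (hL : ∑ i, w i = L + (Fintype.card ι - 1) * ε) :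
    ∑ i, ((L - w i) * f ε + (w i - ε) * f L)
      = (L - ε) * (f L + (Fintype.card ι - 1) * f ε) := by
  simp only [sub_mul, sum_add_distrib, sum_sub_distrib, ← sum_mul, sum_const, card_univ,
    nsmul_eq_mul, hL]
  ring

end PeakVector

section SumLog

variable {ι : Type*} [Fintype ι] {ε L : ℝ} {w : ι → ℝ}

theorem chord_log_le_mul_log (hε : 0 < ε) (hge : ∀ i, ε ≤ w i)
    (hL : ∑ i, w i = L + (Fintype.card ι - 1) * ε) (i : ι) :
    (L - w i) * log ε + (w i - ε) * log L ≤ (L - ε) * log (w i) :=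
  have hwL := le_of_sum_eq_add_mul hge hL i
  strictConcaveOn_log_Ioi.concaveOn.chord_le hε (hε.trans_le ((hge i).trans hwL)) (hge i) hwL

theorem log_add_mul_log_le_sum_log [Nonempty ι] (hε : 0 < ε) (hge : ∀ i, ε ≤ w i)
    (hL : ∑ i, w i = L + (Fintype.card ι - 1) * ε) :
    log L + (Fintype.card ι - 1) * log ε ≤ ∑ i, log (w i) := by
  obtain ⟨j⟩ := ‹Nonempty ι›
  rcases ((hge j).trans (le_of_sum_eq_add_mul hge hL j)).eq_or_lt with rfl | hεL
  · have hflat : ∀ i, w i = ε := fun i => le_antisymm (le_of_sum_eq_add_mul hge hL i) (hge i)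
    exact (sum_comp_eq_of_peak log (hflat j) fun i _ => hflat i).ge
  · have h := sum_le_sum fun i (_ : i ∈ univ) => chord_log_le_mul_log hε hge hL i
    rw [sum_chord_eq log hL, ← mul_sum] at h
    exact le_of_mul_le_mul_left h (sub_pos.2 hεL)

theorem sum_log_eq_iff_exists_peak [Nonempty ι] (hε : 0 < ε) (hge : ∀ i, ε ≤ w i)
    (hL : ∑ i, w i = L + (Fintype.card ι - 1) * ε) :
    ∑ i, log (w i) = log L + (Fintype.card ι - 1) * log ε ↔ ∃ j, w j = L ∧ ∀ i ≠ j, w i = ε := by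
  refine ⟨fun heq => exists_peak_of_forall_eq_or_eq hge hL fun i => ?_,
    fun ⟨j, hj, hne⟩ => sum_comp_eq_of_peak log hj hne⟩
  have hchord : ∀ i ∈ univ, (L - w i) * log ε + (w i - ε) * log L = (L - ε) * log (w i) := by
    refine (sum_eq_sum_iff_of_le fun i _ => chord_log_le_mul_log hε hge hL i).1 ?_
    rw [sum_chord_eq log hL, ← mul_sum, heq]
  by_contra hmid
  rw [not_or] at hmid
  have hwL := le_of_sum_eq_add_mul hge hL i
  exact (strictConcaveOn_log_Ioi.chord_lt hε (hε.trans_le ((hge i).trans hwL))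
    ((hge i).lt_of_ne' hmid.1) (hwL.lt_of_ne hmid.2)).ne (hchord i (mem_univ i))

end SumLog

theorem kl_score_maximized_by_near_onehot_general (M : ℕ) (ε : ℝ) (hε : 0 < ε)
    (w : Fin M → ℝ) (hge : ∀ i, ε ≤ w i) (hsum : ∑ i, w i = 1) :
    -(1 / M : ℝ) * ∑ i, Real.log ((M : ℝ) * w i)
      ≤ -(1 / M : ℝ) * (Real.log ((M : ℝ) * (1 - ((M : ℝ) - 1) * ε))
          + ((M : ℝ) - 1) * Real.log ((M : ℝ) * ε)) ∧
    (-(1 / M : ℝ) * ∑ i, Real.log ((M : ℝ) * w i)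
        = -(1 / M : ℝ) * (Real.log ((M : ℝ) * (1 - ((M : ℝ) - 1) * ε))
            + ((M : ℝ) - 1) * Real.log ((M : ℝ) * ε)) ↔
      ∃ j, w j = 1 - ((M : ℝ) - 1) * ε ∧ ∀ i, i ≠ j → w i = ε) := by
  obtain ⟨j, -, -⟩ := exists_ne_zero_of_sum_ne_zero (hsum ▸ one_ne_zero)
  have : Nonempty (Fin M) := ⟨j⟩
  have hM : (0 : ℝ) < M := by exact_mod_cast j.pos
  set L := 1 - ((M : ℝ) - 1) * ε
  have hL : ∑ i, w i = L + (Fintype.card (Fin M) - 1) * ε := by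
    rw [hsum, Fintype.card_fin]; ring
  have hLpos : 0 < L := hε.trans_le ((hge j).trans (le_of_sum_eq_add_mul hge hL j))
  have hlhs : ∑ i, log (M * w i) = M * log M + ∑ i, log (w i) := by
    simp only [fun i => log_mul hM.ne' (hε.trans_le (hge i)).ne', sum_add_distrib, sum_const,
      card_univ, Fintype.card_fin, nsmul_eq_mul]
  have hrhs : log (M * L) + (M - 1) * log (M * ε) = M * log M + (log L + (M - 1) * log ε) := by
    rw [log_mul hM.ne' hLpos.ne', log_mul hM.ne' hε.ne']
    ring
  have hscale : 0 < 1 / (M : ℝ) := one_div_pos.2 hM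
  rw [hlhs, hrhs, neg_mul, neg_mul, neg_le_neg_iff, neg_inj, mul_le_mul_iff_right₀ hscale,
    mul_right_inj' hscale.ne', add_le_add_iff_left, add_right_inj]
  simpa only [Fintype.card_fin] using
    And.intro (log_add_mul_log_le_sum_log hε hge hL) (sum_log_eq_iff_exists_peak hε hge hL)

theorem kl_score_maximized_by_near_onehot (M : ℕ) (hM : 2 ≤ M) (ε : ℝ) (hε : 0 < ε)
    (hεM : ε ≤ 1 / M) (w : Fin M → ℝ) (hge : ∀ i, ε ≤ w i) (hsum : ∑ i, w i = 1) :
    -(1 / M : ℝ) * ∑ i, Real.log ((M : ℝ) * w i)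
      ≤ -(1 / M : ℝ) * (Real.log ((M : ℝ) * (1 - ((M : ℝ) - 1) * ε))
          + ((M : ℝ) - 1) * Real.log ((M : ℝ) * ε)) ∧
    (-(1 / M : ℝ) * ∑ i, Real.log ((M : ℝ) * w i)
        = -(1 / M : ℝ) * (Real.log ((M : ℝ) * (1 - ((M : ℝ) - 1) * ε))
            + ((M : ℝ) - 1) * Real.log ((M : ℝ) * ε)) ↔
      ∃ j, w j = 1 - ((M : ℝ) - 1) * ε ∧ ∀ i, i ≠ j → w i = ε) :=
  kl_score_maximized_by_near_onehot_general M ε hε w hge hsum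
end

section
/- For a probability vector w on Fin M with positive entries, the two scores are consistent at their extremes: D(w) = M (maximal effective sample size) if and only if K(w) = 0 (minimal approximate KL), where D(w) = (∑ w_i²)⁻¹ and K(w) = −(1/M)∑ log(M w_i). Both conditions are equivalent to w being uniform. -/
/-! Rescale to `x i = M * w i`, so that `∑ x i = M`. Both scores measure the distance of `x`
from the constant vector `1` by a sum of nonnegative terms that vanish exactly at `x i = 1`:
the effective sample size through `∑ (x i - 1) ^ 2 = ∑ x i ^ 2 - M`, the sampled KL divergence
through `∑ (x i - 1 - log (x i)) = -∑ log (x i)`, each term being nonnegative by `log t ≤ t - 1`. -/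

open Finset Real

section

variable {ι : Type*} [Fintype ι] {x : ι → ℝ}

lemma sum_sub_one_sq_eq (hx : ∑ i, x i = Fintype.card ι) :
    ∑ i, (x i - 1) ^ 2 = ∑ i, x i ^ 2 - Fintype.card ι := by
  have hexpand : ∀ i, (x i - 1) ^ 2 = x i ^ 2 - 2 * x i + 1 := fun i => by ring
  simp only [hexpand, sum_add_distrib, sum_sub_distrib, ← mul_sum, hx, sum_const, card_univ,
    nsmul_eq_mul, mul_one]
  ring

lemma sum_sq_eq_card_iff (hx : ∑ i, x i = Fintype.card ι) :
    ∑ i, x i ^ 2 = Fintype.card ι ↔ ∀ i, x i = 1 := by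
  rw [← sub_eq_zero, ← sum_sub_one_sq_eq hx,
    sum_eq_zero_iff_of_nonneg fun i _ => sq_nonneg (x i - 1)]
  simp [sub_eq_zero]

lemma sub_one_sub_log_eq_zero_iff {t : ℝ} (ht : 0 < t) : t - 1 - log t = 0 ↔ t = 1 := by
  refine ⟨fun h => ?_, fun h => by simp [h]⟩
  by_contra hne
  linarith [log_lt_sub_one_of_pos ht hne]

lemma sum_log_eq_zero_iff (hpos : ∀ i, 0 < x i) (hx : ∑ i, x i = Fintype.card ι) :
    ∑ i, log (x i) = 0 ↔ ∀ i, x i = 1 := by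
  have hgap : ∑ i, (x i - 1 - log (x i)) = -∑ i, log (x i) := by
    simp only [sum_sub_distrib, hx, sum_const, card_univ, nsmul_eq_mul, mul_one]
    ring
  rw [← neg_eq_zero, ← hgap, sum_eq_zero_iff_of_nonneg fun i _ => by
    linarith [log_le_sub_one_of_pos (hpos i)]]
  simp [sub_one_sub_log_eq_zero_iff (hpos _)]

end

theorem ess_max_iff_kl_min_general (M : ℕ) (w : Fin M → ℝ)
    (hpos : ∀ i, 0 < w i) (hsum : ∑ i, w i = 1) :
    ((∑ i, (w i) ^ 2)⁻¹ = (M : ℝ) ↔ -(1 / M : ℝ) * ∑ i, Real.log ((M : ℝ) * w i) = 0) ∧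
    ((∑ i, (w i) ^ 2)⁻¹ = (M : ℝ) ↔ ∀ i, w i = 1 / M) ∧
    (-(1 / M : ℝ) * ∑ i, Real.log ((M : ℝ) * w i) = 0 ↔ ∀ i, w i = 1 / M) := by
  have hM : (M : ℝ) ≠ 0 := by
    rintro hM0
    obtain rfl : M = 0 := by exact_mod_cast hM0
    simp at hsum
  have hx : ∑ i, (M : ℝ) * w i = Fintype.card (Fin M) := by simp [← mul_sum, hsum]
  have huniform : (∀ i, (M : ℝ) * w i = 1) ↔ ∀ i, w i = 1 / M := by
    simp only [eq_div_iff hM, mul_comm]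
  have hess : (∑ i, (w i) ^ 2)⁻¹ = (M : ℝ) ↔ ∀ i, w i = 1 / M := by
    rw [← huniform, ← sum_sq_eq_card_iff hx, inv_eq_iff_eq_inv, ← mul_eq_one_iff_eq_inv₀ hM]
    simp only [mul_pow, ← mul_sum, Fintype.card_fin]
    rw [sq, mul_assoc, mul_eq_left₀ hM, mul_comm]
  have hkl : -(1 / M : ℝ) * ∑ i, Real.log ((M : ℝ) * w i) = 0 ↔ ∀ i, w i = 1 / M := by
    rw [← huniform, ← sum_log_eq_zero_iff (fun i => mul_pos (by positivity) (hpos i)) hx]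
    simp [hM]
  exact ⟨hess.trans hkl.symm, hess, hkl⟩

theorem ess_max_iff_kl_min (M : ℕ) (hM : 1 ≤ M) (w : Fin M → ℝ)
    (hpos : ∀ i, 0 < w i) (hsum : ∑ i, w i = 1) :
    ((∑ i, (w i) ^ 2)⁻¹ = (M : ℝ) ↔ -(1 / M : ℝ) * ∑ i, Real.log ((M : ℝ) * w i) = 0) ∧
    ((∑ i, (w i) ^ 2)⁻¹ = (M : ℝ) ↔ ∀ i, w i = 1 / M) ∧
    (-(1 / M : ℝ) * ∑ i, Real.log ((M : ℝ) * w i) = 0 ↔ ∀ i, w i = 1 / M) :=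
  ess_max_iff_kl_min_general M w hpos hsum
end

section
/- Let M ≥ 2 and let w, w' be probability vectors on Fin M with entries ≥ ε for some 0 < ε ≤ 1/M, where w' is the near-one-hot vector (one entry 1 − (M−1)ε, rest ε) and w is any other vector in the constraint set. Then ∏_i w_i ≥ ∏_i w'_i, with equality iff w is a permutation of w'. Hence the near-one-hot vectors minimize the product of entries (equivalently maximize K(w) = −(1/M)∑ log(M w_i)) over the constraint set. -/
/-!
Write `w i = ε * (1 + y i)` with `y i ≥ 0`. Then `∏ w = ε ^ M * ∏ (1 + y i)`, and the Weierstrass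
product inequality `1 + ∑ y ≤ ∏ (1 + y)` is an equality exactly when at most one `y i` is nonzero.
Since `∑ y` is fixed by `∑ w = 1`, the lower bound `ε ^ M * (1 + ∑ y)` is the same for every
admissible `w`, and it is attained precisely by the vectors with at most one entry above `ε`:
the permutations of the near-one-hot vector.
-/

open Finset

section WeierstrassProduct

variable {ι R : Type*} [CommSemiring R]

theorem Finset.one_add_sum_le_prod_one_add [PartialOrder R] [IsOrderedRing R] (s : Finset ι)
    {y : ι → R} (hy : ∀ i ∈ s, 0 ≤ y i) : 1 + ∑ i ∈ s, y i ≤ ∏ i ∈ s, (1 + y i) := by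
  classical
  induction s using Finset.induction_on with
  | empty => simp
  | @insert a s ha ih =>
    rw [sum_insert ha, prod_insert ha]
    have hya := hy a (mem_insert_self a s)
    have hys : 0 ≤ ∑ i ∈ s, y i := sum_nonneg fun i hi => hy i (mem_insert_of_mem hi)
    calc 1 + (y a + ∑ i ∈ s, y i)
        ≤ 1 + (y a + ∑ i ∈ s, y i) + y a * ∑ i ∈ s, y i :=
          le_add_of_nonneg_right (mul_nonneg hya hys)
      _ = (1 + y a) * (1 + ∑ i ∈ s, y i) := by ring
      _ ≤ (1 + y a) * ∏ i ∈ s, (1 + y i) :=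
        mul_le_mul_of_nonneg_left (ih fun i hi => hy i (mem_insert_of_mem hi))
          (add_nonneg zero_le_one hya)

theorem Finset.one_add_sum_lt_prod_one_add [PartialOrder R] [IsStrictOrderedRing R]
    {s : Finset ι} {y : ι → R} (hy : ∀ i ∈ s, 0 ≤ y i) {a b : ι} (ha : a ∈ s) (hb : b ∈ s)
    (hab : a ≠ b) (hya : 0 < y a) (hyb : 0 < y b) : 1 + ∑ i ∈ s, y i < ∏ i ∈ s, (1 + y i) := by
  classical
  set t := s.erase a
  have hyt : ∀ i ∈ t, 0 ≤ y i := fun i hi => hy i (mem_of_mem_erase hi)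
  have hbt : y b ≤ ∑ i ∈ t, y i := single_le_sum hyt (mem_erase.2 ⟨hab.symm, hb⟩)
  rw [← add_sum_erase s y ha, ← mul_prod_erase s (fun i => 1 + y i) ha]
  calc 1 + (y a + ∑ i ∈ t, y i)
      < 1 + (y a + ∑ i ∈ t, y i) + y a * ∑ i ∈ t, y i :=
        lt_add_of_pos_right _ (mul_pos hya (hyb.trans_le hbt))
    _ = (1 + y a) * (1 + ∑ i ∈ t, y i) := by ring
    _ ≤ (1 + y a) * ∏ i ∈ t, (1 + y i) :=
        mul_le_mul_of_nonneg_left (one_add_sum_le_prod_one_add t hyt)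
          (add_nonneg zero_le_one hya.le)

variable [Fintype ι]

theorem Fintype.prod_one_add_eq_one_add_sum {y : ι → R} {k : ι} (hy : ∀ i ≠ k, y i = 0) :
    ∏ i, (1 + y i) = 1 + ∑ i, y i := by
  rw [Fintype.prod_eq_single k fun i hi => by simp [hy i hi],
    Fintype.sum_eq_single k fun i hi => hy i hi]

theorem Fintype.prod_one_add_eq_one_add_sum_iff [Nonempty ι] [PartialOrder R]
    [IsStrictOrderedRing R] {y : ι → R} (hy : ∀ i, 0 ≤ y i) :
    ∏ i, (1 + y i) = 1 + ∑ i, y i ↔ ∃ k, ∀ i ≠ k, y i = 0 := by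
  refine ⟨fun heq => ?_, fun ⟨k, hk⟩ => prod_one_add_eq_one_add_sum hk⟩
  by_contra! hne
  obtain ⟨a, -, ha⟩ := hne (Classical.arbitrary ι)
  obtain ⟨b, hba, hb⟩ := hne a
  exact (one_add_sum_lt_prod_one_add (fun i _ => hy i) (mem_univ a) (mem_univ b) hba.symm
    ((hy a).lt_of_ne' ha) ((hy b).lt_of_ne' hb)).ne heq.symm

end WeierstrassProduct

theorem Fintype.prod_eq_pow_card_mul_prod_one_add {ι K : Type*} [Fintype ι] [Field K] {ε : K}
    (hε : ε ≠ 0) (w : ι → K) : ∏ i, w i = ε ^ Fintype.card ι * ∏ i, (1 + (w i / ε - 1)) := by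
  calc ∏ i, w i = ∏ i, ε * (1 + (w i / ε - 1)) := by congr! 1 with i; field_simp; ring
    _ = ε ^ Fintype.card ι * ∏ i, (1 + (w i / ε - 1)) := by
      rw [prod_mul_distrib, prod_const, card_univ]

theorem eq_comp_swap_of_forall_ne_eq_zero {ι M : Type*} [Fintype ι] [DecidableEq ι]
    [AddCommMonoid M] {f g : ι → M} {k j : ι} (hf : ∀ i ≠ k, f i = 0) (hg : ∀ i ≠ j, g i = 0)
    (hsum : ∑ i, f i = ∑ i, g i) : f = g ∘ Equiv.swap k j := by
  rw [Fintype.sum_eq_single k hf, Fintype.sum_eq_single j hg] at hsum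
  funext i
  by_cases hik : i = k
  · simp [hik, hsum]
  · rw [Function.comp_apply, hf i hik, hg]
    rwa [Ne, Equiv.swap_apply_eq_iff, Equiv.swap_apply_right]

theorem prod_minimized_by_near_onehot_general (M : ℕ) (ε : ℝ) (hε : 0 < ε) (j : Fin M)
    (w' : Fin M → ℝ) (hw' : w' = fun i => if i = j then 1 - ((M : ℝ) - 1) * ε else ε)
    (w : Fin M → ℝ) (hge : ∀ i, ε ≤ w i) (hsum : ∑ i, w i = 1) :
    ∏ i, w' i ≤ ∏ i, w i ∧
    (∏ i, w i = ∏ i, w' i ↔ ∃ σ : Equiv.Perm (Fin M), ∀ i, w i = w' (σ i)) := by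
  set y : Fin M → ℝ := fun i => w i / ε - 1
  set y' : Fin M → ℝ := fun i => w' i / ε - 1
  have hy : ∀ i, 0 ≤ y i := fun i => by simpa [y, le_div_iff₀ hε] using hge i
  have hy' : ∀ i ≠ j, y' i = 0 := fun i hi => by simp [y', hw', hi, hε.ne']
  have hsum_y : ∑ i, y' i = ∑ i, y i := by
    rw [Fintype.sum_eq_single j hy']
    simp only [y, y', hw', if_pos, sum_sub_distrib, ← sum_div, hsum, sum_const, card_univ,
      Fintype.card_fin, nsmul_eq_mul, mul_one]
    field_simp
    ring
  have hprod : ∏ i, w i = ε ^ M * ∏ i, (1 + y i) := by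
    rw [Fintype.prod_eq_pow_card_mul_prod_one_add hε.ne' w, Fintype.card_fin]
  have hprod' : ∏ i, w' i = ε ^ M * (1 + ∑ i, y i) := by
    rw [Fintype.prod_eq_pow_card_mul_prod_one_add hε.ne' w', Fintype.card_fin,
      Fintype.prod_one_add_eq_one_add_sum hy', hsum_y]
  have hpow : 0 < ε ^ M := pow_pos hε M
  have : Nonempty (Fin M) := ⟨j⟩
  refine ⟨?_, fun heq => ?_, fun ⟨σ, hσ⟩ => ?_⟩
  · rw [hprod, hprod']
    exact mul_le_mul_of_nonneg_left (one_add_sum_le_prod_one_add _ fun i _ => hy i) hpow.le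
  · rw [hprod, hprod', mul_right_inj' hpow.ne', Fintype.prod_one_add_eq_one_add_sum_iff hy] at heq
    obtain ⟨k, hk⟩ := heq
    have hyy' := eq_comp_swap_of_forall_ne_eq_zero hk hy' hsum_y.symm
    refine ⟨Equiv.swap k j, fun i => ?_⟩
    simpa [y, y', div_left_inj' hε.ne'] using congrFun hyy' i
  · rw [funext hσ]
    exact Equiv.prod_comp σ w'

theorem prod_minimized_by_near_onehot (M : ℕ) (hM : 2 ≤ M) (ε : ℝ) (hε : 0 < ε)
    (hεM : ε ≤ 1 / M) (j : Fin M)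
    (w' : Fin M → ℝ) (hw' : w' = fun i => if i = j then 1 - ((M : ℝ) - 1) * ε else ε)
    (w : Fin M → ℝ) (hge : ∀ i, ε ≤ w i) (hsum : ∑ i, w i = 1) :
    ∏ i, w' i ≤ ∏ i, w i ∧
    (∏ i, w i = ∏ i, w' i ↔ ∃ σ : Equiv.Perm (Fin M), ∀ i, w i = w' (σ i)) :=
  prod_minimized_by_near_onehot_general M ε hε j w' hw' w hge hsum
end
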